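/- arXiv:2105.11074 — 3 statements merged into one kernel-verified Lean document; each statement's English description precedes it below -/
import Mathlib

section
/- If h is a smooth map satisfying the harmonic map equation h_{z\bar z} + (ψ_u ∘ h) h_z h_{\bar z} = 0 on an open set of ℂ (where ψ is a smooth real-valued function of the target coordinate u), then the Hopf differential Φ(h) = e^{ψ∘h} h_z \bar h_z is holomorphic, i.e., ∂_{\bar z} Φ(h) = 0. -/
open Complex ComplexConjugate

/-- Wirtinger derivative ∂/∂z. -/
noncomputable def wd (f : ℂ → ℂ) (z : ℂ) : ℂ :=
  (1/2 : ℂ) * (fderiv ℝ f z 1 - Complex.I * fderiv ℝ f z Complex.I)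

/-- Wirtinger derivative ∂/∂z̄. -/
noncomputable def wdb (f : ℂ → ℂ) (z : ℂ) : ℂ :=
  (1/2 : ℂ) * (fderiv ℝ f z 1 + Complex.I * fderiv ℝ f z Complex.I)

lemma clm_decomp (L : ℂ →L[ℝ] ℂ) (v : ℂ) :
    L v = (1/2 : ℂ) * (L 1 - Complex.I * L Complex.I) * v
        + (1/2 : ℂ) * (L 1 + Complex.I * L Complex.I) * (conj v) := by
  obtain ⟨x, y, rfl⟩ : ∃ x y : ℝ, v = (x:ℂ) + y * Complex.I :=
    ⟨v.re, v.im, (Complex.re_add_im v).symm⟩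
  have hL : L ((x:ℂ) + y * Complex.I) = x * L 1 + y * L Complex.I := by
    rw [show ((x:ℂ) + y * Complex.I) = x • (1:ℂ) + y • Complex.I by
      simp [Complex.real_smul], map_add, map_smul, map_smul, Complex.real_smul,
      Complex.real_smul]
  have hc : conj ((x:ℂ) + y * Complex.I) = (x:ℂ) - y * Complex.I := by
    rw [map_add, map_mul, Complex.conj_ofReal, Complex.conj_ofReal, Complex.conj_I]
    ring
  rw [hL, hc]
  linear_combination (y : ℂ) * L Complex.I * Complex.I_mul_I

lemma hasFDerivAt_fderiv_apply {f : ℂ → ℂ} (hf : ContDiff ℝ (⊤ : ℕ∞) f) (z v : ℂ) :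
    HasFDerivAt (fun w => fderiv ℝ f w v)
      ((ContinuousLinearMap.apply ℝ ℂ v).comp (fderiv ℝ (fderiv ℝ f) z)) z := by
  have h1 : HasFDerivAt (fderiv ℝ f) (fderiv ℝ (fderiv ℝ f) z) z :=
    (((hf.fderiv_right (m := 1) ((by exact WithTop.coe_le_coe.mpr le_top))).differentiable one_ne_zero) z).hasFDerivAt
  exact (ContinuousLinearMap.apply ℝ ℂ v).hasFDerivAt.comp z h1

lemma hasFDerivAt_wdb {f : ℂ → ℂ} (hf : ContDiff ℝ (⊤ : ℕ∞) f) (z : ℂ) :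
    HasFDerivAt (wdb f)
      ((1/2 : ℂ) • (((ContinuousLinearMap.apply ℝ ℂ 1).comp (fderiv ℝ (fderiv ℝ f) z))
        + Complex.I • ((ContinuousLinearMap.apply ℝ ℂ Complex.I).comp
            (fderiv ℝ (fderiv ℝ f) z)))) z := by
  unfold wdb
  exact ((hasFDerivAt_fderiv_apply hf z 1).add
    ((hasFDerivAt_fderiv_apply hf z Complex.I).const_mul Complex.I)).const_mul (1/2 : ℂ)

lemma hasFDerivAt_wd {f : ℂ → ℂ} (hf : ContDiff ℝ (⊤ : ℕ∞) f) (z : ℂ) :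
    HasFDerivAt (wd f)
      ((1/2 : ℂ) • (((ContinuousLinearMap.apply ℝ ℂ 1).comp (fderiv ℝ (fderiv ℝ f) z))
        - Complex.I • ((ContinuousLinearMap.apply ℝ ℂ Complex.I).comp
            (fderiv ℝ (fderiv ℝ f) z)))) z := by
  unfold wd
  exact ((hasFDerivAt_fderiv_apply hf z 1).sub
    ((hasFDerivAt_fderiv_apply hf z Complex.I).const_mul Complex.I)).const_mul (1/2 : ℂ)

lemma wd_wdb_comm {f : ℂ → ℂ} (hf : ContDiff ℝ (⊤ : ℕ∞) f) (z : ℂ) :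
    wd (wdb f) z = wdb (wd f) z := by
  have hsymm := ((hf.contDiffAt (x := z)).isSymmSndFDerivAt ((by rw [minSmoothness_of_isRCLikeNormedField]; exact WithTop.coe_le_coe.mpr le_top))) 1 Complex.I
  have h1 := (hasFDerivAt_wdb hf z).fderiv
  have h2 := (hasFDerivAt_wd hf z).fderiv
  unfold wdb at h1
  unfold wd at h2
  unfold wd wdb
  rw [h1, h2]
  simp only [ContinuousLinearMap.smul_apply, ContinuousLinearMap.add_apply,
    ContinuousLinearMap.sub_apply, ContinuousLinearMap.comp_apply,
    ContinuousLinearMap.apply_apply, smul_eq_mul]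
  linear_combination (Complex.I / 2) * hsymm

lemma wdb_mul {f g : ℂ → ℂ} {z : ℂ} (hf : DifferentiableAt ℝ f z)
    (hg : DifferentiableAt ℝ g z) :
    wdb (fun w => f w * g w) z = wdb f z * g z + f z * wdb g z := by
  unfold wdb
  rw [fderiv_fun_mul hf hg]
  simp only [ContinuousLinearMap.add_apply, ContinuousLinearMap.smul_apply, smul_eq_mul]
  ring

lemma wdb_conj {f : ℂ → ℂ} {z : ℂ} (hf : DifferentiableAt ℝ f z) :
    wdb (fun w => conj (f w)) z = conj (wd f z) := by
  have hc : HasFDerivAt (fun w => conj (f w))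
      ((Complex.conjCLE : ℂ →L[ℝ] ℂ).comp (fderiv ℝ f z)) z :=
    ((Complex.conjCLE : ℂ →L[ℝ] ℂ).hasFDerivAt).comp z hf.hasFDerivAt
  unfold wdb wd
  rw [hc.fderiv]
  simp only [ContinuousLinearMap.comp_apply, ContinuousLinearEquiv.coe_coe,
    Complex.conjCLE_apply, map_mul, map_sub, map_div₀, map_one, map_ofNat,
    Complex.conj_I]
  ring

lemma wdb_cexp {f : ℂ → ℂ} {z : ℂ} (hf : DifferentiableAt ℝ f z) :
    wdb (fun w => Complex.exp (f w)) z = Complex.exp (f z) * wdb f z := by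
  unfold wdb
  rw [(hf.hasFDerivAt.cexp).fderiv]
  simp only [ContinuousLinearMap.smul_apply, smul_eq_mul]
  ring

lemma wdb_comp {f h : ℂ → ℂ} {z : ℂ} (hf : DifferentiableAt ℝ f (h z))
    (hh : DifferentiableAt ℝ h z) :
    wdb (fun w => f (h w)) z
      = wd f (h z) * wdb h z + wdb f (h z) * conj (wd h z) := by
  have hc : HasFDerivAt (fun w => f (h w))
      ((fderiv ℝ f (h z)).comp (fderiv ℝ h z)) z :=
    hf.hasFDerivAt.comp z hh.hasFDerivAt
  unfold wdb wd
  rw [hc.fderiv]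
  simp only [ContinuousLinearMap.comp_apply]
  rw [clm_decomp (fderiv ℝ f (h z)) (fderiv ℝ h z 1),
      clm_decomp (fderiv ℝ f (h z)) (fderiv ℝ h z Complex.I)]
  simp only [map_mul, map_sub, map_div₀, map_one, map_ofNat, Complex.conj_I]
  ring

lemma wdb_ofReal {ψ : ℂ → ℝ} (hψ : ContDiff ℝ (⊤ : ℕ∞) ψ) (u : ℂ) :
    wdb (fun x => ((ψ x : ℝ) : ℂ)) u = conj (wd (fun x => ((ψ x : ℝ) : ℂ)) u) := by
  have hc : HasFDerivAt (fun x => ((ψ x : ℝ) : ℂ))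
      (Complex.ofRealCLM.comp (fderiv ℝ ψ u)) u :=
    Complex.ofRealCLM.hasFDerivAt.comp u ((hψ.differentiable (by simp)) u).hasFDerivAt
  unfold wdb wd
  rw [hc.fderiv]
  simp only [ContinuousLinearMap.comp_apply, Complex.ofRealCLM_apply, map_mul,
    map_sub, map_div₀, map_one, map_ofNat, Complex.conj_I, Complex.conj_ofReal]
  ring

/-- if `h` satisfies the harmonic map equation
`h_{z z̄} + (ψ_u ∘ h) h_z h_{z̄} = 0` on an open set `U`, then the Hopf differential
`Φ(h) = e^{ψ∘h} h_z \bar h_z` (where `\bar h_z = conj (h_{z̄})`) is holomorphic on `U`. -/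
theorem hopf_differential_holomorphic
    (U : Set ℂ) (hU : IsOpen U) (h : ℂ → ℂ) (ψ : ℂ → ℝ)
    (hh : ContDiff ℝ (⊤ : ℕ∞) h) (hψ : ContDiff ℝ (⊤ : ℕ∞) ψ)
    (harm : ∀ z ∈ U,
      wdb (wd h) z + wd (fun u => (ψ u : ℂ)) (h z) * wd h z * wdb h z = 0) :
    ∀ z ∈ U,
      wdb (fun w => Complex.exp (ψ (h w)) * wd h w * conj (wdb h w)) z = 0 := by
  intro z hz
  set a := wd h z with ha
  set b := wdb h z with hb
  set p := wd (fun u => (ψ u : ℂ)) (h z) with hp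
  have hharm : wdb (wd h) z = -(p * a * b) := by
    have e := harm z hz
    linear_combination e
  -- differentiability facts
  have hψc : ContDiff ℝ (⊤ : ℕ∞) (fun u => ((ψ u : ℝ) : ℂ)) := Complex.ofRealCLM.contDiff.comp hψ
  have hg : ContDiff ℝ (⊤ : ℕ∞) (fun w => ((ψ (h w) : ℝ) : ℂ)) := hψc.comp hh
  have dG : DifferentiableAt ℝ (fun w => ((ψ (h w) : ℝ) : ℂ)) z := (hg.differentiable (by simp)) z
  have dE : DifferentiableAt ℝ (fun w => Complex.exp (ψ (h w))) z := dG.cexp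
  have dW : DifferentiableAt ℝ (wd h) z := (hasFDerivAt_wd hh z).differentiableAt
  have dB : DifferentiableAt ℝ (wdb h) z := (hasFDerivAt_wdb hh z).differentiableAt
  have dC : DifferentiableAt ℝ (fun w => conj (wdb h w)) z := by
    exact ((Complex.conjCLE : ℂ →L[ℝ] ℂ).differentiableAt).comp z dB
  -- computation
  have step1 : wdb (fun w => Complex.exp (ψ (h w)) * wd h w * conj (wdb h w)) z
      = wdb (fun w => Complex.exp (ψ (h w)) * wd h w) z * conj b
        + (Complex.exp (ψ (h z)) * a) * wdb (fun w => conj (wdb h w)) z :=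
    wdb_mul (dE.mul dW) dC
  have step2 : wdb (fun w => Complex.exp (ψ (h w)) * wd h w) z
      = Complex.exp (ψ (h z)) * wdb (fun w => ((ψ (h w) : ℝ) : ℂ)) z * a
        + Complex.exp (ψ (h z)) * wdb (wd h) z := by
    rw [wdb_mul dE dW, wdb_cexp dG]
  have step3 : wdb (fun w => ((ψ (h w) : ℝ) : ℂ)) z = p * b + conj p * conj a := by
    have e := wdb_comp (f := fun u => ((ψ u : ℝ) : ℂ)) (h := h)
      ((hψc.differentiable (by simp)) (h z)) ((hh.differentiable (by simp)) z)
    rw [wdb_ofReal hψ (h z)] at e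
    exact e
  have step4 : wdb (fun w => conj (wdb h w)) z = conj (wd (wdb h) z) := wdb_conj dB
  have step5 : wd (wdb h) z = -(p * a * b) := by rw [wd_wdb_comm hh z, hharm]
  rw [step1, step2, step3, step4, step5, hharm]
  simp only [map_neg, map_mul]
  ring
end

section
/- Let γ be a Möbius transformation and φ^ε a smooth family of functions satisfying the cocycle relation φ^ε ∘ γ^ε + log(γ^ε)' + log \overline{(γ^ε)'} = φ^ε, where γ^ε = f^ε ∘ γ ∘ (f^ε)^{−1} for a smooth family of diffeomorphisms f^ε with f^0 = id. Then the quantity λ = \dot φ + φ_z \dot f + \dot f_z (with dots denoting ∂/∂ε at ε = 0) is γ-invariant: λ ∘ γ = λ. -/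
open Complex ComplexConjugate

lemma wd_congr {f g : ℂ → ℂ} {z : ℂ} (h : f =ᶠ[nhds z] g) : wd f z = wd g z := by
  unfold wd; rw [h.fderiv_eq]

lemma fderiv_real_apply {f : ℂ → ℂ} {z : ℂ} (hf : DifferentiableAt ℂ f z) (v : ℂ) :
    fderiv ℝ f z v = v * deriv f z := by
  have h := hf.fderiv_restrictScalars ℝ
  have h1 : fderiv ℝ f z v = (fderiv ℂ f z) v := by rw [h]; rfl
  have h2 : (fderiv ℂ f z) v = v • (fderiv ℂ f z) 1 := by
    rw [← map_smul, smul_eq_mul, mul_one]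
  rw [h1, h2, fderiv_apply_one_eq_deriv, smul_eq_mul]

lemma wd_of_differentiableAt {f : ℂ → ℂ} {z : ℂ} (hf : DifferentiableAt ℂ f z) :
    wd f z = deriv f z := by
  unfold wd
  rw [fderiv_real_apply hf, fderiv_real_apply hf]
  have hI : Complex.I * Complex.I = -1 := Complex.I_mul_I
  linear_combination (-(1/2) * deriv f z) * hI

lemma wd_add {f g : ℂ → ℂ} {z : ℂ} (hf : DifferentiableAt ℝ f z)
    (hg : DifferentiableAt ℝ g z) :
    wd (fun w => f w + g w) z = wd f z + wd g z := by
  unfold wd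
  rw [fderiv_fun_add hf hg]
  simp only [ContinuousLinearMap.add_apply]
  ring

lemma wd_mul {f g : ℂ → ℂ} {z : ℂ} (hf : DifferentiableAt ℝ f z)
    (hg : DifferentiableAt ℝ g z) :
    wd (fun w => f w * g w) z = f z * wd g z + wd f z * g z := by
  unfold wd
  rw [fderiv_fun_mul hf hg]
  simp only [ContinuousLinearMap.add_apply, ContinuousLinearMap.smul_apply, smul_eq_mul]
  ring

lemma wd_comp {g γ : ℂ → ℂ} {z : ℂ} (hg : DifferentiableAt ℝ g (γ z))
    (hγ : DifferentiableAt ℂ γ z) :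
    wd (g ∘ γ) z = wd g (γ z) * deriv γ z := by
  unfold wd
  rw [fderiv_comp z hg (hγ.restrictScalars ℝ)]
  simp only [ContinuousLinearMap.comp_apply]
  rw [fderiv_real_apply hγ, fderiv_real_apply hγ, one_mul]
  set c := deriv γ z
  set L := fderiv ℝ g (γ z)
  have hc : c = (c.re : ℂ) + (c.im : ℂ) * Complex.I := by
    simpa using (Complex.re_add_im c).symm
  have hL : ∀ v : ℂ, L v = (v.re : ℂ) * L 1 + (v.im : ℂ) * L Complex.I := by
    intro v
    have : v = v.re • (1 : ℂ) + v.im • Complex.I := by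
      simp [Complex.real_smul, Complex.re_add_im]
    rw [this, map_add, map_smul, map_smul]
    simp [Complex.real_smul]
  rw [hL c, hL (Complex.I * c)]
  have h1 : ((Complex.I * c).re : ℂ) = -(c.im : ℂ) := by simp
  have h2 : ((Complex.I * c).im : ℂ) = (c.re : ℂ) := by simp
  rw [h1, h2]
  have hI : Complex.I * Complex.I = -1 := Complex.I_mul_I
  linear_combination (-(1/2) * (L 1 - Complex.I * L Complex.I)) * hc
    + ((1/2) * (c.im : ℂ) * (L Complex.I)) * hI

/-- the quantity `λ = φ̇ + φ_z ḟ + ḟ_z` is `γ`-invariant, given the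
derived identities `φ̇∘γ + (φ_z∘γ)γ̇ + γ̇'/γ' = φ̇`, `(φ_z∘γ)γ' + γ''/γ' = φ_z`,
and `ḟ∘γ = γ̇ + γ'ḟ`. -/
theorem lambda_gamma_invariant
    (Ω : Set ℂ) (hΩ : IsOpen Ω) (γ dotγ φ dotφ dotf : ℂ → ℂ)
    (hmaps : Set.MapsTo γ Ω Ω)
    (hγ : ∀ z ∈ Ω, AnalyticAt ℂ γ z) (hdotγ : ∀ z ∈ Ω, AnalyticAt ℂ dotγ z)
    (hγ' : ∀ z ∈ Ω, deriv γ z ≠ 0)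
    (hφ : ContDiff ℝ (⊤ : ℕ∞) φ) (hdotφ : ContDiff ℝ (⊤ : ℕ∞) dotφ) (hdotf : ContDiff ℝ (⊤ : ℕ∞) dotf)
    (h1 : ∀ z ∈ Ω, dotφ (γ z) + wd φ (γ z) * dotγ z + deriv dotγ z / deriv γ z = dotφ z)
    (h2 : ∀ z ∈ Ω, wd φ (γ z) * deriv γ z + deriv (deriv γ) z / deriv γ z = wd φ z)
    (h3 : ∀ z ∈ Ω, dotf (γ z) = dotγ z + deriv γ z * dotf z) :
    ∀ z ∈ Ω,
      dotφ (γ z) + wd φ (γ z) * dotf (γ z) + wd dotf (γ z)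
        = dotφ z + wd φ z * dotf z + wd dotf z := by
  intro z hz
  have hg : deriv γ z ≠ 0 := hγ' z hz
  have hγz : AnalyticAt ℂ γ z := hγ z hz
  have hγd : DifferentiableAt ℂ γ z := hγz.differentiableAt
  have hdγ : AnalyticAt ℂ (deriv γ) z := by
    obtain ⟨s, hsn, hans⟩ := hγz.eventually_analyticAt.exists_mem
    obtain ⟨t, hts, hto, hzt⟩ := mem_nhds_iff.mp hsn
    have h : AnalyticOnNhd ℂ γ t := fun w hw => hans w (hts hw)
    exact h.deriv z hzt
  have hdotγz : AnalyticAt ℂ dotγ z := hdotγ z hz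
  have hdfR : ∀ w, DifferentiableAt ℝ dotf w := fun w =>
    (hdotf.differentiable (by simp)) w
  -- chain rule for dotf ∘ γ
  have hev : (dotf ∘ γ) =ᶠ[nhds z] fun w => dotγ w + deriv γ w * dotf w := by
    filter_upwards [hΩ.mem_nhds hz] with w hw
    exact h3 w hw
  have e1 : wd (dotf ∘ γ) z = wd dotf (γ z) * deriv γ z :=
    wd_comp (hdfR (γ z)) hγd
  have e2 : wd (fun w => dotγ w + deriv γ w * dotf w) z
      = deriv dotγ z + (deriv γ z * wd dotf z + deriv (deriv γ) z * dotf z) := by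
    rw [wd_add (hdotγz.differentiableAt.restrictScalars ℝ)
      ((hdγ.differentiableAt.restrictScalars ℝ).fun_mul (hdfR z)),
      wd_mul (hdγ.differentiableAt.restrictScalars ℝ) (hdfR z),
      wd_of_differentiableAt hdotγz.differentiableAt,
      wd_of_differentiableAt hdγ.differentiableAt]
  have key : wd dotf (γ z) * deriv γ z
      = deriv dotγ z + (deriv γ z * wd dotf z + deriv (deriv γ) z * dotf z) := by
    rw [← e1, wd_congr hev, e2]
  -- fraction-free versions of h1, h2
  have H1 := h1 z hz
  have H2 := h2 z hz
  have H3 := h3 z hz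
  have eH1 : deriv dotγ z / deriv γ z
      = dotφ z - (dotφ (γ z) + wd φ (γ z) * dotγ z) := by linear_combination H1
  have H1' : deriv dotγ z
      = (dotφ z - (dotφ (γ z) + wd φ (γ z) * dotγ z)) * deriv γ z :=
    (div_eq_iff hg).mp eH1
  have eH2 : deriv (deriv γ) z / deriv γ z
      = wd φ z - wd φ (γ z) * deriv γ z := by linear_combination H2
  have H2' : deriv (deriv γ) z
      = (wd φ z - wd φ (γ z) * deriv γ z) * deriv γ z :=
    (div_eq_iff hg).mp eH2
  have final : (dotφ (γ z) + wd φ (γ z) * dotf (γ z) + wd dotf (γ z)) * deriv γ z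
      = (dotφ z + wd φ z * dotf z + wd dotf z) * deriv γ z := by
    rw [H3]
    linear_combination key + H1' + dotf z * H2'
  exact mul_right_cancel₀ hg final
end

section
/- Local variational identity for the Liouville 2-form density: for smooth families φ^ε, f^ε with f^0 = id, \dot f = ∂_ε|_0 f^ε, \dot φ = ∂_ε|_0 φ^ε, μ = \dot f_{\bar z}, and λ = \dot φ + φ_z \dot f + \dot f_z, one has ∂_ε|_{ε=0} [ (φ^ε_z ∘ f^ε)(φ^ε_{\bar z} ∘ f^ε) df^ε ∧ d\bar f^ε ] = ((2φ_{zz} − φ_z²)μ − 2φ_{z\bar z}λ) dz∧d\bar z − d(φ_z λ dz) + d(φ_{\bar z} λ d\bar z) − dξ, where ξ = 2φ_z \dot f_{\bar z} d\bar z − φ d\dot f_z. -/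
open Complex ComplexConjugate

noncomputable def wgen (c : ℂ) (g : ℂ → ℂ) (z : ℂ) : ℂ :=
  (1/2 : ℂ) * (fderiv ℝ g z 1 + c * fderiv ℝ g z Complex.I)

lemma wd_eq : wd = wgen (-Complex.I) := by
  funext g z; simp [wd, wgen]; ring

lemma wdb_eq : wdb = wgen Complex.I := rfl

lemma wgen_add (c : ℂ) {A B : ℂ → ℂ} {z : ℂ} (hA : DifferentiableAt ℝ A z)
    (hB : DifferentiableAt ℝ B z) :
    wgen c (fun w => A w + B w) z = wgen c A z + wgen c B z := by
  simp [wgen, fderiv_fun_add hA hB]; ring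

lemma wgen_mul (c : ℂ) {A B : ℂ → ℂ} {z : ℂ} (hA : DifferentiableAt ℝ A z)
    (hB : DifferentiableAt ℝ B z) :
    wgen c (fun w => A w * B w) z = wgen c A z * B z + A z * wgen c B z := by
  simp [wgen, fderiv_fun_mul hA hB]; ring

lemma wgen_sub (c : ℂ) {A B : ℂ → ℂ} {z : ℂ} (hA : DifferentiableAt ℝ A z)
    (hB : DifferentiableAt ℝ B z) :
    wgen c (fun w => A w - B w) z = wgen c A z - wgen c B z := by
  simp [wgen, fderiv_fun_sub hA hB]; ring

lemma wgen_conj (c : ℂ) {A : ℂ → ℂ} {z : ℂ} (hA : DifferentiableAt ℝ A z) :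
    wgen c (fun w => conj (A w)) z = conj (wgen (conj c) A z) := by
  have h : fderiv ℝ (conjCLE ∘ A) z
      = (conjCLE : ℂ ≃L[ℝ] ℂ).toContinuousLinearMap.comp (fderiv ℝ A z) :=
    ContinuousLinearEquiv.comp_fderiv conjCLE
  have h2 : (fun w => conj (A w)) = conjCLE ∘ A := by funext w; simp
  rw [wgen, h2, h, wgen, map_mul, map_add, map_mul, Complex.conj_conj]
  simp only [ContinuousLinearMap.coe_comp', Function.comp_apply,
    ContinuousLinearEquiv.coe_coe, conjCLE_apply]
  norm_num [Complex.ext_iff]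

lemma wgen_const (c a : ℂ) (z : ℂ) : wgen c (fun _ => a) z = 0 := by
  simp [wgen]

lemma holo_fderiv_I {h : ℂ → ℂ} {z : ℂ} (hh : DifferentiableAt ℂ h z) :
    fderiv ℝ h z Complex.I = Complex.I * fderiv ℝ h z 1 := by
  rw [hh.fderiv_restrictScalars ℝ]
  simp only [ContinuousLinearMap.coe_restrictScalars']
  have := (fderiv ℂ h z).map_smul Complex.I (1:ℂ)
  simpa using this

lemma wgen_I_of_holo {h : ℂ → ℂ} {z : ℂ} (hh : DifferentiableAt ℂ h z) :
    wgen Complex.I h z = 0 := by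
  rw [wgen, holo_fderiv_I hh]
  have : Complex.I * (Complex.I * fderiv ℝ h z 1) = - fderiv ℝ h z 1 := by
    rw [← mul_assoc, Complex.I_mul_I]; ring
  rw [this]; ring

lemma wgen_negI_of_holo {h : ℂ → ℂ} {z : ℂ} (hh : DifferentiableAt ℂ h z) :
    wgen (-Complex.I) h z = fderiv ℝ h z 1 := by
  rw [wgen, holo_fderiv_I hh]
  have : -Complex.I * (Complex.I * fderiv ℝ h z 1) = fderiv ℝ h z 1 := by
    rw [← mul_assoc]; rw [show -Complex.I * Complex.I = 1 by simp [Complex.I_mul_I]]; ring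
  rw [this]; ring

lemma wgen_id_negI (z : ℂ) : wgen (-Complex.I) (fun w : ℂ => w) z = 1 := by
  have h : DifferentiableAt ℂ (fun w : ℂ => w) z := differentiableAt_fun_id
  rw [wgen_negI_of_holo h, fderiv_id']
  rfl

lemma wgen_id_I (z : ℂ) : wgen Complex.I (fun w : ℂ => w) z = 0 :=
  wgen_I_of_holo differentiableAt_fun_id

/- ## two-variable machinery -/

lemma fderiv_slice1 {g : ℂ × ℂ → ℂ} (hg : ContDiff ℝ (⊤ : ℕ∞) g) (ε₀ w v : ℂ) :
    fderiv ℝ (fun ε => g (ε, w)) ε₀ v = fderiv ℝ g (ε₀, w) (v, 0) := by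
  have h1 : HasFDerivAt (fun ε : ℂ => (ε, w)) (ContinuousLinearMap.inl ℝ ℂ ℂ) ε₀ :=
    hasFDerivAt_prodMk_left ε₀ w
  have h2 : HasFDerivAt g (fderiv ℝ g (ε₀, w)) (ε₀, w) :=
    (hg.differentiable (by simp) (ε₀, w)).hasFDerivAt
  have h3 : HasFDerivAt (fun ε => g (ε, w))
      ((fderiv ℝ g (ε₀, w)).comp (ContinuousLinearMap.inl ℝ ℂ ℂ)) ε₀ := h2.comp ε₀ h1
  rw [h3.fderiv]; rfl

lemma fderiv_slice2 {g : ℂ × ℂ → ℂ} (hg : ContDiff ℝ (⊤ : ℕ∞) g) (ε₀ w u : ℂ) :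
    fderiv ℝ (fun x => g (ε₀, x)) w u = fderiv ℝ g (ε₀, w) (0, u) := by
  have h1 : HasFDerivAt (fun x : ℂ => (ε₀, x)) (ContinuousLinearMap.inr ℝ ℂ ℂ) w :=
    hasFDerivAt_prodMk_right ε₀ w
  have h2 : HasFDerivAt g (fderiv ℝ g (ε₀, w)) (ε₀, w) :=
    (hg.differentiable (by simp) (ε₀, w)).hasFDerivAt
  have h3 : HasFDerivAt (fun x => g (ε₀, x))
      ((fderiv ℝ g (ε₀, w)).comp (ContinuousLinearMap.inr ℝ ℂ ℂ)) w := h2.comp w h1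
  rw [h3.fderiv]; rfl

lemma contDiff_cross2 {g : ℂ × ℂ → ℂ} (hg : ContDiff ℝ (⊤ : ℕ∞) g) (ε₀ : ℂ) (a : ℂ × ℂ) :
    ContDiff ℝ (⊤ : ℕ∞) (fun w : ℂ => fderiv ℝ g (ε₀, w) a) := by
  have h1 : ContDiff ℝ (⊤ : ℕ∞) (fderiv ℝ g) := hg.fderiv_right (by simp)
  have h2 : ContDiff ℝ (⊤ : ℕ∞) (fun w : ℂ => (ε₀, w)) := contDiff_const.prodMk contDiff_id
  exact (ContinuousLinearMap.apply ℝ ℂ a).contDiff.comp (h1.comp h2)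

lemma contDiff_cross1 {g : ℂ × ℂ → ℂ} (hg : ContDiff ℝ (⊤ : ℕ∞) g) (w₀ : ℂ) (a : ℂ × ℂ) :
    ContDiff ℝ (⊤ : ℕ∞) (fun ε : ℂ => fderiv ℝ g (ε, w₀) a) := by
  have h1 : ContDiff ℝ (⊤ : ℕ∞) (fderiv ℝ g) := hg.fderiv_right (by simp)
  have h2 : ContDiff ℝ (⊤ : ℕ∞) (fun ε : ℂ => (ε, w₀)) := contDiff_id.prodMk contDiff_const
  exact (ContinuousLinearMap.apply ℝ ℂ a).contDiff.comp (h1.comp h2)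

lemma fderiv_cross2 {g : ℂ × ℂ → ℂ} (hg : ContDiff ℝ (⊤ : ℕ∞) g) (ε₀ w u : ℂ) (a : ℂ × ℂ) :
    fderiv ℝ (fun w : ℂ => fderiv ℝ g (ε₀, w) a) w u
      = fderiv ℝ (fderiv ℝ g) (ε₀, w) (0, u) a := by
  have h1 : HasFDerivAt (fun x : ℂ => (ε₀, x)) (ContinuousLinearMap.inr ℝ ℂ ℂ) w :=
    hasFDerivAt_prodMk_right ε₀ w
  have hd : ContDiff ℝ (⊤ : ℕ∞) (fderiv ℝ g) := hg.fderiv_right (by simp)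
  have h2 : HasFDerivAt (fderiv ℝ g) (fderiv ℝ (fderiv ℝ g) (ε₀, w)) (ε₀, w) :=
    (hd.differentiable (by simp) (ε₀, w)).hasFDerivAt
  have h3 : HasFDerivAt (fun w : ℂ => fderiv ℝ g (ε₀, w) a)
      ((((ContinuousLinearMap.apply ℝ ℂ a).comp (fderiv ℝ (fderiv ℝ g) (ε₀, w))).comp
        (ContinuousLinearMap.inr ℝ ℂ ℂ))) w :=
    ((ContinuousLinearMap.apply ℝ ℂ a).hasFDerivAt.comp (ε₀, w) h2).comp w h1
  rw [h3.fderiv]; rfl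

lemma fderiv_cross1 {g : ℂ × ℂ → ℂ} (hg : ContDiff ℝ (⊤ : ℕ∞) g) (ε₀ w v : ℂ) (a : ℂ × ℂ) :
    fderiv ℝ (fun ε : ℂ => fderiv ℝ g (ε, w) a) ε₀ v
      = fderiv ℝ (fderiv ℝ g) (ε₀, w) (v, 0) a := by
  have h1 : HasFDerivAt (fun ε : ℂ => (ε, w)) (ContinuousLinearMap.inl ℝ ℂ ℂ) ε₀ :=
    hasFDerivAt_prodMk_left ε₀ w
  have hd : ContDiff ℝ (⊤ : ℕ∞) (fderiv ℝ g) := hg.fderiv_right (by simp)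
  have h2 : HasFDerivAt (fderiv ℝ g) (fderiv ℝ (fderiv ℝ g) (ε₀, w)) (ε₀, w) :=
    (hd.differentiable (by simp) (ε₀, w)).hasFDerivAt
  have h3 : HasFDerivAt (fun ε : ℂ => fderiv ℝ g (ε, w) a)
      ((((ContinuousLinearMap.apply ℝ ℂ a).comp (fderiv ℝ (fderiv ℝ g) (ε₀, w))).comp
        (ContinuousLinearMap.inl ℝ ℂ ℂ))) ε₀ :=
    by have := ((ContinuousLinearMap.apply ℝ ℂ a).hasFDerivAt.comp (ε₀, w) h2).comp ε₀ h1
       exact this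
  rw [h3.fderiv]; rfl

lemma snd_symm {g : ℂ × ℂ → ℂ} (hg : ContDiff ℝ (⊤ : ℕ∞) g) (p : ℂ × ℂ) (x y : ℂ × ℂ) :
    fderiv ℝ (fderiv ℝ g) p x y = fderiv ℝ (fderiv ℝ g) p y x :=
  (hg.contDiffAt.isSymmSndFDerivAt (by norm_num; exact WithTop.coe_le_coe.mpr le_top)) x y

lemma wgen_slice1_eq {g : ℂ × ℂ → ℂ} (hg : ContDiff ℝ (⊤ : ℕ∞) g) (c ε₀ : ℂ) :
    (fun w => wgen c (fun ε => g (ε, w)) ε₀)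
      = fun w => (1/2 : ℂ) * (fderiv ℝ g (ε₀, w) (1, 0) + c * fderiv ℝ g (ε₀, w) (I, 0)) := by
  funext w; rw [wgen, fderiv_slice1 hg, fderiv_slice1 hg]

lemma wgen_slice2_eq {g : ℂ × ℂ → ℂ} (hg : ContDiff ℝ (⊤ : ℕ∞) g) (c w₀ : ℂ) :
    (fun ε => wgen c (fun x => g (ε, x)) w₀)
      = fun ε => (1/2 : ℂ) * (fderiv ℝ g (ε, w₀) (0, 1) + c * fderiv ℝ g (ε, w₀) (0, I)) := by
  funext ε; rw [wgen, fderiv_slice2 hg, fderiv_slice2 hg]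

lemma contDiff_wgen_slice1 {g : ℂ × ℂ → ℂ} (hg : ContDiff ℝ (⊤ : ℕ∞) g) (c ε₀ : ℂ) :
    ContDiff ℝ (⊤ : ℕ∞) (fun w => wgen c (fun ε => g (ε, w)) ε₀) := by
  rw [wgen_slice1_eq hg]
  exact contDiff_const.mul ((contDiff_cross2 hg ε₀ _).add
    (contDiff_const.mul (contDiff_cross2 hg ε₀ _)))

lemma contDiff_wgen_slice2 {g : ℂ × ℂ → ℂ} (hg : ContDiff ℝ (⊤ : ℕ∞) g) (c w₀ : ℂ) :
    ContDiff ℝ (⊤ : ℕ∞) (fun ε => wgen c (fun x => g (ε, x)) w₀) := by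
  rw [wgen_slice2_eq hg]
  exact contDiff_const.mul ((contDiff_cross1 hg w₀ _).add
    (contDiff_const.mul (contDiff_cross1 hg w₀ _)))

lemma wgen_joint2_eq {g : ℂ × ℂ → ℂ} (hg : ContDiff ℝ (⊤ : ℕ∞) g) (c : ℂ) :
    (fun p : ℂ × ℂ => wgen c (fun x => g (p.1, x)) p.2)
      = fun p => (1/2 : ℂ) * (fderiv ℝ g p (0, 1) + c * fderiv ℝ g p (0, I)) := by
  funext p
  rw [wgen, fderiv_slice2 hg p.1 p.2 1, fderiv_slice2 hg p.1 p.2 I]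

lemma contDiff_wgen_joint2 {g : ℂ × ℂ → ℂ} (hg : ContDiff ℝ (⊤ : ℕ∞) g) (c : ℂ) :
    ContDiff ℝ (⊤ : ℕ∞) (fun p : ℂ × ℂ => wgen c (fun x => g (p.1, x)) p.2) := by
  rw [wgen_joint2_eq hg]
  have h1 : ContDiff ℝ (⊤ : ℕ∞) (fderiv ℝ g) := hg.fderiv_right (by simp)
  exact contDiff_const.mul
    (((ContinuousLinearMap.apply ℝ ℂ ((0:ℂ), (1:ℂ))).contDiff.comp h1).add
      (contDiff_const.mul ((ContinuousLinearMap.apply ℝ ℂ ((0:ℂ), I)).contDiff.comp h1)))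

lemma contDiff_apply1 {G : ℂ → ℂ} (hG : ContDiff ℝ (⊤ : ℕ∞) G) (a : ℂ) :
    ContDiff ℝ (⊤ : ℕ∞) (fun z : ℂ => fderiv ℝ G z a) :=
  (ContinuousLinearMap.apply ℝ ℂ a).contDiff.comp (hG.fderiv_right (by simp))

lemma contDiff_wgen {G : ℂ → ℂ} (hG : ContDiff ℝ (⊤ : ℕ∞) G) (c : ℂ) :
    ContDiff ℝ (⊤ : ℕ∞) (wgen c G) := by
  show ContDiff ℝ (⊤ : ℕ∞) (fun z => (1/2 : ℂ) * (fderiv ℝ G z 1 + c * fderiv ℝ G z Complex.I))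
  exact contDiff_const.mul ((contDiff_apply1 hG 1).add (contDiff_const.mul (contDiff_apply1 hG I)))

lemma fderiv_apply1 {G : ℂ → ℂ} (hG : ContDiff ℝ (⊤ : ℕ∞) G) (z u a : ℂ) :
    fderiv ℝ (fun w : ℂ => fderiv ℝ G w a) z u = fderiv ℝ (fderiv ℝ G) z u a := by
  have hd : ContDiff ℝ (⊤ : ℕ∞) (fderiv ℝ G) := hG.fderiv_right (by simp)
  have h2 : HasFDerivAt (fderiv ℝ G) (fderiv ℝ (fderiv ℝ G) z) z :=
    (hd.differentiable (by simp) z).hasFDerivAt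
  have h3 : HasFDerivAt (fun w : ℂ => fderiv ℝ G w a)
      ((ContinuousLinearMap.apply ℝ ℂ a).comp (fderiv ℝ (fderiv ℝ G) z)) z :=
    (ContinuousLinearMap.apply ℝ ℂ a).hasFDerivAt.comp z h2
  rw [h3.fderiv]; rfl

lemma snd_symm1 {G : ℂ → ℂ} (hG : ContDiff ℝ (⊤ : ℕ∞) G) (z x y : ℂ) :
    fderiv ℝ (fderiv ℝ G) z x y = fderiv ℝ (fderiv ℝ G) z y x :=
  (hG.contDiffAt.isSymmSndFDerivAt (by norm_num; exact WithTop.coe_le_coe.mpr le_top)) x y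

lemma wgen_comm {G : ℂ → ℂ} (hG : ContDiff ℝ (⊤ : ℕ∞) G) (c c' z : ℂ) :
    wgen c (wgen c' G) z = wgen c' (wgen c G) z := by
  have e : ∀ d : ℂ, wgen d G = fun w => (1/2 : ℂ) * (fderiv ℝ G w 1 + d * fderiv ℝ G w I) := by
    intro d; rfl
  have key : ∀ d : ℂ, ∀ u : ℂ, fderiv ℝ (wgen d G) z u
      = (1/2 : ℂ) * (fderiv ℝ (fderiv ℝ G) z u 1 + d * fderiv ℝ (fderiv ℝ G) z u I) := by
    intro d u
    rw [e d]
    have hA : DifferentiableAt ℝ (fun w : ℂ => fderiv ℝ G w 1) z :=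
      ((contDiff_apply1 hG 1).differentiable (by simp) z)
    have hB : DifferentiableAt ℝ (fun w : ℂ => fderiv ℝ G w I) z :=
      ((contDiff_apply1 hG I).differentiable (by simp) z)
    rw [fderiv_const_mul (a := fun w => fderiv ℝ G w 1 + d * fderiv ℝ G w I) (hA.add (hB.const_mul d)) ((1:ℂ)/2)]
    simp only [ContinuousLinearMap.smul_apply, smul_eq_mul]
    rw [fderiv_fun_add hA (hB.const_mul d)]
    simp only [ContinuousLinearMap.add_apply]
    rw [fderiv_const_mul hB d]
    simp only [ContinuousLinearMap.smul_apply, smul_eq_mul]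
    rw [fderiv_apply1 hG, fderiv_apply1 hG]
  rw [wgen, wgen, key c' 1, key c' I, key c 1, key c I, snd_symm1 hG z I 1]
  ring

lemma fderiv_half_comb {A B : ℂ → ℂ} {z : ℂ} (hA : DifferentiableAt ℝ A z)
    (hB : DifferentiableAt ℝ B z) (c u : ℂ) :
    fderiv ℝ (fun w => (1/2 : ℂ) * (A w + c * B w)) z u
      = (1/2 : ℂ) * (fderiv ℝ A z u + c * fderiv ℝ B z u) := by
  rw [fderiv_const_mul (a := fun w => A w + c * B w) (hA.add (hB.const_mul c)) ((1:ℂ)/2)]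
  simp only [ContinuousLinearMap.smul_apply, smul_eq_mul]
  rw [fderiv_fun_add hA (hB.const_mul c)]
  simp only [ContinuousLinearMap.add_apply]
  rw [fderiv_const_mul hB c]
  simp only [ContinuousLinearMap.smul_apply, smul_eq_mul]

lemma wgen_swap {g : ℂ × ℂ → ℂ} (hg : ContDiff ℝ (⊤ : ℕ∞) g) (c c' z : ℂ) :
    wgen c (fun w => wgen c' (fun ε => g (ε, w)) 0) z
      = wgen c' (fun ε => wgen c (fun x => g (ε, x)) z) 0 := by
  rw [wgen_slice1_eq hg, wgen_slice2_eq hg]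
  have dc2 : ∀ a : ℂ × ℂ, DifferentiableAt ℝ (fun w : ℂ => fderiv ℝ g (0, w) a) z :=
    fun a => (contDiff_cross2 hg 0 a).differentiable (by simp) z
  have dc1 : ∀ a : ℂ × ℂ, DifferentiableAt ℝ (fun ε : ℂ => fderiv ℝ g (ε, z) a) 0 :=
    fun a => (contDiff_cross1 hg z a).differentiable (by simp) 0
  rw [wgen, wgen]
  rw [fderiv_half_comb (dc2 (1,0)) (dc2 (I,0)) c' 1,
      fderiv_half_comb (dc2 (1,0)) (dc2 (I,0)) c' I,
      fderiv_half_comb (dc1 (0,1)) (dc1 (0,I)) c 1,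
      fderiv_half_comb (dc1 (0,1)) (dc1 (0,I)) c I]
  rw [fderiv_cross2 hg 0 z 1 (1,0), fderiv_cross2 hg 0 z 1 (I,0),
      fderiv_cross2 hg 0 z I (1,0), fderiv_cross2 hg 0 z I (I,0),
      fderiv_cross1 hg 0 z 1 (0,1), fderiv_cross1 hg 0 z 1 (0,I),
      fderiv_cross1 hg 0 z I (0,1), fderiv_cross1 hg 0 z I (0,I)]
  rw [snd_symm hg (0,z) (1,0) (0,1), snd_symm hg (0,z) (I,0) (0,1),
      snd_symm hg (0,z) (1,0) (0,I), snd_symm hg (0,z) (I,0) (0,I)]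
  ring

lemma wgen_chain {g : ℂ × ℂ → ℂ} (hg : ContDiff ℝ (⊤ : ℕ∞) g) {h : ℂ → ℂ}
    (hh : DifferentiableAt ℂ h 0) {z : ℂ} (hz : h 0 = z) :
    wgen (-Complex.I) (fun ε => g (ε, h ε)) 0
      = wgen (-Complex.I) (fun ε => g (ε, z)) 0
        + wgen (-Complex.I) (fun w => g (0, w)) z * wgen (-Complex.I) h 0 := by
  have hhR : DifferentiableAt ℝ h 0 := hh.restrictScalars ℝ
  have hI : fderiv ℝ h 0 Complex.I = Complex.I * fderiv ℝ h 0 1 := holo_fderiv_I hh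
  have hk : HasFDerivAt (fun ε : ℂ => (ε, h ε))
      ((ContinuousLinearMap.id ℝ ℂ).prod (fderiv ℝ h 0)) 0 :=
    (hasFDerivAt_id 0).prodMk hhR.hasFDerivAt
  have hgd : HasFDerivAt g (fderiv ℝ g (0, z)) (0, h 0) := by
    rw [hz]; exact (hg.differentiable (by simp) _).hasFDerivAt
  have hcomp : HasFDerivAt (fun ε => g (ε, h ε))
      ((fderiv ℝ g (0, z)).comp ((ContinuousLinearMap.id ℝ ℂ).prod (fderiv ℝ h 0))) 0 :=
    hgd.comp 0 hk
  set dh := fderiv ℝ h 0 1 with hdh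
  set D := fderiv ℝ g (0, z) with hD
  have e1 : wgen (-Complex.I) (fun ε' => g (ε', h ε')) 0
      = (1/2 : ℂ) * (D (1, dh) - Complex.I * D (Complex.I, Complex.I * dh)) := by
    rw [wgen, hcomp.fderiv]
    simp only [ContinuousLinearMap.coe_comp', Function.comp_apply,
      ContinuousLinearMap.prod_apply, ContinuousLinearMap.coe_id', id_eq]
    rw [hI]
    ring
  have split : ∀ v x : ℂ,
      D (v, x) = D (v, 0) + (x.re : ℂ) * D (0, 1) + (x.im : ℂ) * D (0, Complex.I) := by
    intro v x
    have hvx : ((v, x) : ℂ × ℂ)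
        = (v, 0) + (x.re : ℝ) • ((0 : ℂ), (1 : ℂ)) + (x.im : ℝ) • ((0 : ℂ), Complex.I) := by
      apply Prod.ext <;> simp [Complex.real_smul, Complex.re_add_im]
    rw [hvx, map_add, map_add, map_smul, map_smul]
    simp [Complex.real_smul]
  have hs1 : wgen (-Complex.I) (fun ε => g (ε, z)) 0
      = (1/2 : ℂ) * (D (1, 0) - Complex.I * D (Complex.I, 0)) := by
    rw [wgen, fderiv_slice1 hg, fderiv_slice1 hg]; ring
  have hs2 : wgen (-Complex.I) (fun w => g (0, w)) z
      = (1/2 : ℂ) * (D (0, 1) - Complex.I * D (0, Complex.I)) := by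
    rw [wgen, fderiv_slice2 hg, fderiv_slice2 hg]; ring
  have hwh : wgen (-Complex.I) h 0 = dh := wgen_negI_of_holo hh
  rw [e1, hs1, hs2, hwh, split 1 dh, split Complex.I (Complex.I * dh)]
  have hre : ((Complex.I * dh).re : ℂ) = -(dh.im : ℂ) := by simp [Complex.mul_re]
  have him : ((Complex.I * dh).im : ℂ) = (dh.re : ℂ) := by simp [Complex.mul_im]
  rw [hre, him]
  have hdc : dh = (dh.re : ℂ) + (dh.im : ℂ) * Complex.I := (Complex.re_add_im dh).symm
  linear_combination ((1/2:ℂ) * (dh.im:ℂ) * D (0, Complex.I)) * Complex.I_sq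
    - ((1/2:ℂ) * (D (0,1) - Complex.I * D (0, Complex.I))) * hdc
/-- local variational identity for the Liouville 2-form density.
The parameter ε is complex and ∂_ε denotes the Wirtinger ε-derivative at 0.
All 2-forms are written through their coefficients relative to dz∧dz̄:
`df^ε∧d\bar f^ε = (f_z conj f_z − f_z̄ conj f_z̄) dz∧dz̄`,
`d(α dz) = −α_z̄ dz∧dz̄`, `d(β dz̄) = β_z dz∧dz̄`, and
`ξ = 2φ_z ḟ_z̄ dz̄ − φ dḟ_z` has `dξ`-coefficient
`2∂_z(φ_z μ) − (φ_z ∂_z̄ ḟ_z − φ_z̄ ∂_z ḟ_z)`. -/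
theorem liouville_density_variation
    (Ω : Set ℂ) (hΩ : IsOpen Ω)
    (f : ℂ → ℂ → ℂ) (φ : ℂ → ℂ → ℝ)
    (hf : ContDiff ℝ (⊤ : ℕ∞) (fun p : ℂ × ℂ => f p.1 p.2))
    (hφ : ContDiff ℝ (⊤ : ℕ∞) (fun p : ℂ × ℂ => φ p.1 p.2))
    (hf0 : f 0 = id)
    (hhol : ∀ z ε₀ : ℂ, DifferentiableAt ℂ (fun ε => f ε z) ε₀)
    (Φ0 dotf dotφ μ lam : ℂ → ℂ)
    (hΦ0 : Φ0 = fun w => ((φ 0 w : ℝ) : ℂ))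
    (hdotf : dotf = fun w => wd (fun ε => f ε w) 0)
    (hdotφ : dotφ = fun w => wd (fun ε => ((φ ε w : ℝ) : ℂ)) 0)
    (hμ : μ = fun w => wdb dotf w)
    (hlam : lam = fun w => dotφ w + wd Φ0 w * dotf w + wd dotf w) :
    ∀ z ∈ Ω,
      wd (fun ε =>
          wd (fun w => ((φ ε w : ℝ) : ℂ)) (f ε z)
            * wdb (fun w => ((φ ε w : ℝ) : ℂ)) (f ε z)
            * (wd (f ε) z * conj (wd (f ε) z) - wdb (f ε) z * conj (wdb (f ε) z))) 0
        = (2 * wd (wd Φ0) z - (wd Φ0 z)^2) * μ z - 2 * wdb (wd Φ0) z * lam z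
          + wdb (fun w => wd Φ0 w * lam w) z
          + wd (fun w => wdb Φ0 w * lam w) z
          - 2 * wd (fun w => wd Φ0 w * μ w) z
          + wd Φ0 z * wdb (fun w => wd dotf w) z
          - wdb Φ0 z * wd (fun w => wd dotf w) z := by
  intro z _
  subst hΦ0 hdotf hdotφ hμ hlam
  simp only [wd_eq, wdb_eq]
  -- basic smoothness
  have hPs : ContDiff ℝ (⊤ : ℕ∞) (fun p : ℂ × ℂ => ((φ p.1 p.2 : ℝ) : ℂ)) :=
    Complex.ofRealCLM.contDiff.comp hφ
  have hFs : ContDiff ℝ (⊤ : ℕ∞) (fun p : ℂ × ℂ => f p.1 p.2) := hf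
  have hf0z : f 0 z = z := by rw [hf0]; rfl
  have hGj : ContDiff ℝ (⊤ : ℕ∞)
      (fun p : ℂ × ℂ => wgen (-Complex.I) (fun x => ((φ p.1 x : ℝ) : ℂ)) p.2) :=
    contDiff_wgen_joint2 hPs (-Complex.I)
  have hGbj : ContDiff ℝ (⊤ : ℕ∞)
      (fun p : ℂ × ℂ => wgen Complex.I (fun x => ((φ p.1 x : ℝ) : ℂ)) p.2) :=
    contDiff_wgen_joint2 hPs Complex.I
  have hfzslice : ContDiff ℝ (⊤ : ℕ∞) (fun ε => f ε z) := hf.comp (contDiff_id.prodMk contDiff_const)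
  have hkd : DifferentiableAt ℝ (fun ε : ℂ => (ε, f ε z)) 0 :=
    differentiableAt_id.prodMk (hfzslice.differentiable (by simp) 0)
  -- differentiability in ε of the factors of the integrand
  have dA : DifferentiableAt ℝ
      (fun ε => wgen (-Complex.I) (fun w => ((φ ε w : ℝ) : ℂ)) (f ε z)) 0 := by
    have h := DifferentiableAt.comp (𝕜 := ℝ)
      (g := fun p : ℂ × ℂ => wgen (-Complex.I) (fun x => ((φ p.1 x : ℝ) : ℂ)) p.2)
      (f := fun ε : ℂ => (ε, f ε z)) 0 (hGj.differentiable (by simp) (0, f 0 z)) hkd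
    exact h
  have dB : DifferentiableAt ℝ
      (fun ε => wgen Complex.I (fun w => ((φ ε w : ℝ) : ℂ)) (f ε z)) 0 := by
    have h := DifferentiableAt.comp (𝕜 := ℝ)
      (g := fun p : ℂ × ℂ => wgen Complex.I (fun x => ((φ p.1 x : ℝ) : ℂ)) p.2)
      (f := fun ε : ℂ => (ε, f ε z)) 0 (hGbj.differentiable (by simp) (0, f 0 z)) hkd
    exact h
  have dAB : DifferentiableAt ℝ
      (fun ε => wgen (-Complex.I) (fun w => ((φ ε w : ℝ) : ℂ)) (f ε z)
        * wgen Complex.I (fun w => ((φ ε w : ℝ) : ℂ)) (f ε z)) 0 := dA.mul dB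
  have dC : DifferentiableAt ℝ (fun ε => wgen (-Complex.I) (f ε) z) 0 :=
    (contDiff_wgen_slice2 hFs (-Complex.I) z).differentiable (by simp) 0
  have dD : DifferentiableAt ℝ (fun ε => wgen Complex.I (f ε) z) 0 :=
    (contDiff_wgen_slice2 hFs Complex.I z).differentiable (by simp) 0
  have dCc : DifferentiableAt ℝ (fun ε => conj (wgen (-Complex.I) (f ε) z)) 0 := dC.star
  have dDc : DifferentiableAt ℝ (fun ε => conj (wgen Complex.I (f ε) z)) 0 := dD.star
  have dJ : DifferentiableAt ℝ
      (fun ε => wgen (-Complex.I) (f ε) z * conj (wgen (-Complex.I) (f ε) z)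
        - wgen Complex.I (f ε) z * conj (wgen Complex.I (f ε) z)) 0 :=
    (dC.mul dCc).sub (dD.mul dDc)
  -- LHS expansion
  have step1 : wgen (-Complex.I)
      (fun ε =>
        wgen (-Complex.I) (fun w => ((φ ε w : ℝ) : ℂ)) (f ε z)
          * wgen Complex.I (fun w => ((φ ε w : ℝ) : ℂ)) (f ε z)
          * (wgen (-Complex.I) (f ε) z * conj (wgen (-Complex.I) (f ε) z)
            - wgen Complex.I (f ε) z * conj (wgen Complex.I (f ε) z))) 0
      = wgen (-Complex.I)
          (fun ε => wgen (-Complex.I) (fun w => ((φ ε w : ℝ) : ℂ)) (f ε z)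
            * wgen Complex.I (fun w => ((φ ε w : ℝ) : ℂ)) (f ε z)) 0
          * (wgen (-Complex.I) (f 0) z * conj (wgen (-Complex.I) (f 0) z)
            - wgen Complex.I (f 0) z * conj (wgen Complex.I (f 0) z))
        + (wgen (-Complex.I) (fun w => ((φ 0 w : ℝ) : ℂ)) (f 0 z)
            * wgen Complex.I (fun w => ((φ 0 w : ℝ) : ℂ)) (f 0 z))
          * wgen (-Complex.I)
            (fun ε => wgen (-Complex.I) (f ε) z * conj (wgen (-Complex.I) (f ε) z)
              - wgen Complex.I (f ε) z * conj (wgen Complex.I (f ε) z)) 0 :=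
    wgen_mul (-Complex.I) dAB dJ
  have step2 : wgen (-Complex.I)
      (fun ε => wgen (-Complex.I) (fun w => ((φ ε w : ℝ) : ℂ)) (f ε z)
        * wgen Complex.I (fun w => ((φ ε w : ℝ) : ℂ)) (f ε z)) 0
      = wgen (-Complex.I) (fun ε => wgen (-Complex.I) (fun w => ((φ ε w : ℝ) : ℂ)) (f ε z)) 0
          * wgen Complex.I (fun w => ((φ 0 w : ℝ) : ℂ)) (f 0 z)
        + wgen (-Complex.I) (fun w => ((φ 0 w : ℝ) : ℂ)) (f 0 z)
          * wgen (-Complex.I) (fun ε => wgen Complex.I (fun w => ((φ ε w : ℝ) : ℂ)) (f ε z)) 0 :=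
    wgen_mul (-Complex.I) dA dB
  have step3 : wgen (-Complex.I)
      (fun ε => wgen (-Complex.I) (f ε) z * conj (wgen (-Complex.I) (f ε) z)
        - wgen Complex.I (f ε) z * conj (wgen Complex.I (f ε) z)) 0
      = (wgen (-Complex.I) (fun ε => wgen (-Complex.I) (f ε) z) 0
          * conj (wgen (-Complex.I) (f 0) z)
        + wgen (-Complex.I) (f 0) z
          * wgen (-Complex.I) (fun ε => conj (wgen (-Complex.I) (f ε) z)) 0)
        - (wgen (-Complex.I) (fun ε => wgen Complex.I (f ε) z) 0
            * conj (wgen Complex.I (f 0) z)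
          + wgen Complex.I (f 0) z
            * wgen (-Complex.I) (fun ε => conj (wgen Complex.I (f ε) z)) 0) := by
    have e1 := wgen_sub (-Complex.I)
      (A := fun ε => wgen (-Complex.I) (f ε) z * conj (wgen (-Complex.I) (f ε) z))
      (B := fun ε => wgen Complex.I (f ε) z * conj (wgen Complex.I (f ε) z)) (dC.mul dCc) (dD.mul dDc)
    have e2 := wgen_mul (-Complex.I) dC dCc
    have e3 := wgen_mul (-Complex.I) dD dDc
    rw [e1, e2, e3]
  -- ε-derivatives of the factors
  have hAdot : wgen (-Complex.I)
      (fun ε => wgen (-Complex.I) (fun w => ((φ ε w : ℝ) : ℂ)) (f ε z)) 0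
      = wgen (-Complex.I) (fun ε => wgen (-Complex.I) (fun x => ((φ ε x : ℝ) : ℂ)) z) 0
        + wgen (-Complex.I) (fun w => wgen (-Complex.I) (fun x => ((φ 0 x : ℝ) : ℂ)) w) z
          * wgen (-Complex.I) (fun ε => f ε z) 0 :=
    wgen_chain hGj (hhol z 0) hf0z
  have hBdot : wgen (-Complex.I)
      (fun ε => wgen Complex.I (fun w => ((φ ε w : ℝ) : ℂ)) (f ε z)) 0
      = wgen (-Complex.I) (fun ε => wgen Complex.I (fun x => ((φ ε x : ℝ) : ℂ)) z) 0
        + wgen (-Complex.I) (fun w => wgen Complex.I (fun x => ((φ 0 x : ℝ) : ℂ)) w) z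
          * wgen (-Complex.I) (fun ε => f ε z) 0 :=
    wgen_chain hGbj (hhol z 0) hf0z
  have hAswap : wgen (-Complex.I) (fun ε => wgen (-Complex.I) (fun x => ((φ ε x : ℝ) : ℂ)) z) 0
      = wgen (-Complex.I) (fun w => wgen (-Complex.I) (fun ε => ((φ ε w : ℝ) : ℂ)) 0) z :=
    (wgen_swap hPs (-Complex.I) (-Complex.I) z).symm
  have hBswap : wgen (-Complex.I) (fun ε => wgen Complex.I (fun x => ((φ ε x : ℝ) : ℂ)) z) 0
      = wgen Complex.I (fun w => wgen (-Complex.I) (fun ε => ((φ ε w : ℝ) : ℂ)) 0) z :=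
    (wgen_swap hPs Complex.I (-Complex.I) z).symm
  have hCdot : wgen (-Complex.I) (fun ε => wgen (-Complex.I) (f ε) z) 0
      = wgen (-Complex.I) (fun w => wgen (-Complex.I) (fun ε => f ε w) 0) z :=
    (wgen_swap hFs (-Complex.I) (-Complex.I) z).symm
  have hDdot : wgen (-Complex.I) (fun ε => wgen Complex.I (f ε) z) 0
      = wgen Complex.I (fun w => wgen (-Complex.I) (fun ε => f ε w) 0) z :=
    (wgen_swap hFs Complex.I (-Complex.I) z).symm
  have hzero1 : (fun w : ℂ => wgen Complex.I (fun ε => f ε w) 0) = fun _ => (0 : ℂ) :=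
    funext fun w => wgen_I_of_holo (hhol w 0)
  have hCcdot : wgen (-Complex.I) (fun ε => conj (wgen (-Complex.I) (f ε) z)) 0 = 0 := by
    have e := wgen_conj (-Complex.I) (A := fun ε => wgen (-Complex.I) (f ε) z) dC
    rw [e]
    have e2 : wgen (conj (-Complex.I)) (fun ε => wgen (-Complex.I) (f ε) z) 0
        = wgen (-Complex.I) (fun w => wgen Complex.I (fun ε => f ε w) 0) z := by
      rw [show (conj (-Complex.I)) = Complex.I by simp]
      exact (wgen_swap hFs (-Complex.I) Complex.I z).symm
    rw [e2, hzero1, wgen_const]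
    simp
  have hDcdot : wgen (-Complex.I) (fun ε => conj (wgen Complex.I (f ε) z)) 0 = 0 := by
    have e := wgen_conj (-Complex.I) (A := fun ε => wgen Complex.I (f ε) z) dD
    rw [e]
    have e2 : wgen (conj (-Complex.I)) (fun ε => wgen Complex.I (f ε) z) 0
        = wgen Complex.I (fun w => wgen Complex.I (fun ε => f ε w) 0) z := by
      rw [show (conj (-Complex.I)) = Complex.I by simp]
      exact (wgen_swap hFs Complex.I Complex.I z).symm
    rw [e2, hzero1, wgen_const]
    simp
  have hC0 : wgen (-Complex.I) (f 0) z = 1 := by rw [hf0]; exact wgen_id_negI z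
  have hD0 : wgen Complex.I (f 0) z = 0 := by rw [hf0]; exact wgen_id_I z
  -- one-variable smoothness for the RHS
  have sP : ContDiff ℝ (⊤ : ℕ∞) (fun w => ((φ 0 w : ℝ) : ℂ)) :=
    hPs.comp (contDiff_const.prodMk contDiff_id)
  have sDF : ContDiff ℝ (⊤ : ℕ∞) (fun w => wgen (-Complex.I) (fun ε => f ε w) 0) :=
    contDiff_wgen_slice1 hFs (-Complex.I) 0
  have sDP : ContDiff ℝ (⊤ : ℕ∞) (fun w => wgen (-Complex.I) (fun ε => ((φ ε w : ℝ) : ℂ)) 0) :=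
    contDiff_wgen_slice1 hPs (-Complex.I) 0
  have dP : DifferentiableAt ℝ (fun w => ((φ 0 w : ℝ) : ℂ)) z := sP.differentiable (by simp) z
  have dDF : DifferentiableAt ℝ (fun w => wgen (-Complex.I) (fun ε => f ε w) 0) z :=
    sDF.differentiable (by simp) z
  have dDP : DifferentiableAt ℝ (fun w => wgen (-Complex.I) (fun ε => ((φ ε w : ℝ) : ℂ)) 0) z :=
    sDP.differentiable (by simp) z
  have dwdP : DifferentiableAt ℝ (wgen (-Complex.I) (fun w => ((φ 0 w : ℝ) : ℂ))) z :=
    (contDiff_wgen sP (-Complex.I)).differentiable (by simp) z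
  have dwdbP : DifferentiableAt ℝ (wgen Complex.I (fun w => ((φ 0 w : ℝ) : ℂ))) z :=
    (contDiff_wgen sP Complex.I).differentiable (by simp) z
  have dwdDF : DifferentiableAt ℝ
      (wgen (-Complex.I) (fun w => wgen (-Complex.I) (fun ε => f ε w) 0)) z :=
    (contDiff_wgen sDF (-Complex.I)).differentiable (by simp) z
  have dwdbDF : DifferentiableAt ℝ
      (wgen Complex.I (fun w => wgen (-Complex.I) (fun ε => f ε w) 0)) z :=
    (contDiff_wgen sDF Complex.I).differentiable (by simp) z
  have dprod : DifferentiableAt ℝ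
      (fun w => wgen (-Complex.I) (fun w => ((φ 0 w : ℝ) : ℂ)) w
        * wgen (-Complex.I) (fun ε => f ε w) 0) z := dwdP.mul dDF
  have dLam : DifferentiableAt ℝ
      (fun w => wgen (-Complex.I) (fun ε => ((φ ε w : ℝ) : ℂ)) 0
        + wgen (-Complex.I) (fun w => ((φ 0 w : ℝ) : ℂ)) w
          * wgen (-Complex.I) (fun ε => f ε w) 0
        + wgen (-Complex.I) (fun w => wgen (-Complex.I) (fun ε => f ε w) 0) w) z :=
    (dDP.add dprod).add dwdDF
  -- RHS expansions
  have hT1 : wgen Complex.I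
      (fun w => wgen (-Complex.I) (fun w => ((φ 0 w : ℝ) : ℂ)) w
        * (wgen (-Complex.I) (fun ε => ((φ ε w : ℝ) : ℂ)) 0
          + wgen (-Complex.I) (fun w => ((φ 0 w : ℝ) : ℂ)) w
            * wgen (-Complex.I) (fun ε => f ε w) 0
          + wgen (-Complex.I) (fun w => wgen (-Complex.I) (fun ε => f ε w) 0) w)) z
      = wgen Complex.I (wgen (-Complex.I) (fun w => ((φ 0 w : ℝ) : ℂ))) z
          * (wgen (-Complex.I) (fun ε => ((φ ε z : ℝ) : ℂ)) 0
            + wgen (-Complex.I) (fun w => ((φ 0 w : ℝ) : ℂ)) z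
              * wgen (-Complex.I) (fun ε => f ε z) 0
            + wgen (-Complex.I) (fun w => wgen (-Complex.I) (fun ε => f ε w) 0) z)
        + wgen (-Complex.I) (fun w => ((φ 0 w : ℝ) : ℂ)) z
          * wgen Complex.I
            (fun w => wgen (-Complex.I) (fun ε => ((φ ε w : ℝ) : ℂ)) 0
              + wgen (-Complex.I) (fun w => ((φ 0 w : ℝ) : ℂ)) w
                * wgen (-Complex.I) (fun ε => f ε w) 0
              + wgen (-Complex.I) (fun w => wgen (-Complex.I) (fun ε => f ε w) 0) w) z :=
    wgen_mul Complex.I dwdP dLam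
  have hT2 : wgen (-Complex.I)
      (fun w => wgen Complex.I (fun w => ((φ 0 w : ℝ) : ℂ)) w
        * (wgen (-Complex.I) (fun ε => ((φ ε w : ℝ) : ℂ)) 0
          + wgen (-Complex.I) (fun w => ((φ 0 w : ℝ) : ℂ)) w
            * wgen (-Complex.I) (fun ε => f ε w) 0
          + wgen (-Complex.I) (fun w => wgen (-Complex.I) (fun ε => f ε w) 0) w)) z
      = wgen (-Complex.I) (wgen Complex.I (fun w => ((φ 0 w : ℝ) : ℂ))) z
          * (wgen (-Complex.I) (fun ε => ((φ ε z : ℝ) : ℂ)) 0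
            + wgen (-Complex.I) (fun w => ((φ 0 w : ℝ) : ℂ)) z
              * wgen (-Complex.I) (fun ε => f ε z) 0
            + wgen (-Complex.I) (fun w => wgen (-Complex.I) (fun ε => f ε w) 0) z)
        + wgen Complex.I (fun w => ((φ 0 w : ℝ) : ℂ)) z
          * wgen (-Complex.I)
            (fun w => wgen (-Complex.I) (fun ε => ((φ ε w : ℝ) : ℂ)) 0
              + wgen (-Complex.I) (fun w => ((φ 0 w : ℝ) : ℂ)) w
                * wgen (-Complex.I) (fun ε => f ε w) 0
              + wgen (-Complex.I) (fun w => wgen (-Complex.I) (fun ε => f ε w) 0) w) z :=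
    wgen_mul (-Complex.I) dwdbP dLam
  have hT3 : wgen (-Complex.I)
      (fun w => wgen (-Complex.I) (fun w => ((φ 0 w : ℝ) : ℂ)) w
        * wgen Complex.I (fun w => wgen (-Complex.I) (fun ε => f ε w) 0) w) z
      = wgen (-Complex.I) (wgen (-Complex.I) (fun w => ((φ 0 w : ℝ) : ℂ))) z
          * wgen Complex.I (fun w => wgen (-Complex.I) (fun ε => f ε w) 0) z
        + wgen (-Complex.I) (fun w => ((φ 0 w : ℝ) : ℂ)) z
          * wgen (-Complex.I)
            (wgen Complex.I (fun w => wgen (-Complex.I) (fun ε => f ε w) 0)) z :=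
    wgen_mul (-Complex.I) dwdP dwdbDF
  -- expansions of wgen applied to lam
  have hLamI : wgen Complex.I
      (fun w => wgen (-Complex.I) (fun ε => ((φ ε w : ℝ) : ℂ)) 0
        + wgen (-Complex.I) (fun w => ((φ 0 w : ℝ) : ℂ)) w
          * wgen (-Complex.I) (fun ε => f ε w) 0
        + wgen (-Complex.I) (fun w => wgen (-Complex.I) (fun ε => f ε w) 0) w) z
      = wgen Complex.I (fun w => wgen (-Complex.I) (fun ε => ((φ ε w : ℝ) : ℂ)) 0) z
        + (wgen Complex.I (wgen (-Complex.I) (fun w => ((φ 0 w : ℝ) : ℂ))) z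
            * wgen (-Complex.I) (fun ε => f ε z) 0
          + wgen (-Complex.I) (fun w => ((φ 0 w : ℝ) : ℂ)) z
            * wgen Complex.I (fun w => wgen (-Complex.I) (fun ε => f ε w) 0) z)
        + wgen Complex.I (wgen (-Complex.I) (fun w => wgen (-Complex.I) (fun ε => f ε w) 0)) z := by
    have e1 := wgen_add Complex.I
      (A := fun w => wgen (-Complex.I) (fun ε => ((φ ε w : ℝ) : ℂ)) 0 + wgen (-Complex.I) (fun w => ((φ 0 w : ℝ) : ℂ)) w * wgen (-Complex.I) (fun ε => f ε w) 0) (dDP.add dprod) dwdDF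
    have e2 := wgen_add Complex.I dDP dprod
    have e3 := wgen_mul Complex.I dwdP dDF
    rw [e1, e2, e3]
  have hLamnegI : wgen (-Complex.I)
      (fun w => wgen (-Complex.I) (fun ε => ((φ ε w : ℝ) : ℂ)) 0
        + wgen (-Complex.I) (fun w => ((φ 0 w : ℝ) : ℂ)) w
          * wgen (-Complex.I) (fun ε => f ε w) 0
        + wgen (-Complex.I) (fun w => wgen (-Complex.I) (fun ε => f ε w) 0) w) z
      = wgen (-Complex.I) (fun w => wgen (-Complex.I) (fun ε => ((φ ε w : ℝ) : ℂ)) 0) z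
        + (wgen (-Complex.I) (wgen (-Complex.I) (fun w => ((φ 0 w : ℝ) : ℂ))) z
            * wgen (-Complex.I) (fun ε => f ε z) 0
          + wgen (-Complex.I) (fun w => ((φ 0 w : ℝ) : ℂ)) z
            * wgen (-Complex.I) (fun w => wgen (-Complex.I) (fun ε => f ε w) 0) z)
        + wgen (-Complex.I)
            (wgen (-Complex.I) (fun w => wgen (-Complex.I) (fun ε => f ε w) 0)) z := by
    have e1 := wgen_add (-Complex.I)
      (A := fun w => wgen (-Complex.I) (fun ε => ((φ ε w : ℝ) : ℂ)) 0 + wgen (-Complex.I) (fun w => ((φ 0 w : ℝ) : ℂ)) w * wgen (-Complex.I) (fun ε => f ε w) 0) (dDP.add dprod) dwdDF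
    have e2 := wgen_add (-Complex.I) dDP dprod
    have e3 := wgen_mul (-Complex.I) dwdP dDF
    rw [e1, e2, e3]
  -- commutation of mixed one-variable Wirtinger derivatives
  have ccP : wgen (-Complex.I) (wgen Complex.I (fun w => ((φ 0 w : ℝ) : ℂ))) z
      = wgen Complex.I (wgen (-Complex.I) (fun w => ((φ 0 w : ℝ) : ℂ))) z :=
    wgen_comm sP (-Complex.I) Complex.I z
  have ccDF : wgen Complex.I
        (wgen (-Complex.I) (fun w => wgen (-Complex.I) (fun ε => f ε w) 0)) z
      = wgen (-Complex.I)
          (wgen Complex.I (fun w => wgen (-Complex.I) (fun ε => f ε w) 0)) z :=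
    wgen_comm sDF Complex.I (-Complex.I) z
  -- assemble
  rw [step1, step2, step3, hAdot, hBdot, hAswap, hBswap, hCdot, hDdot, hCcdot, hDcdot,
    hC0, hD0, hf0z, hT1, hT2, hT3, hLamI, hLamnegI, ccP, ccDF]
  simp only [map_one, map_zero, mul_zero, zero_mul, mul_one, one_mul, sub_zero, add_zero,
    zero_add]
  ring
end
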